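/- arXiv:2302.09016 — 7 statements merged into one kernel-verified Lean document; each statement's English description precedes it below -/
import Mathlib

section
/- Let G be a finite group, P a Sylow p-subgroup of G, and x, y elements of the center of P. If x and y are conjugate in G, then they are conjugate in the normalizer N_G(P). (Burnside's fusion theorem.) -/
/-- **Burnside's fusion theorem.** If `P` is a Sylow `p`-subgroup of a finite group `G`
and `x, y ∈ Z(P)` are conjugate in `G`, then they are conjugate in `N_G(P)`. -/
theorem burnside_fusion {G : Type*} [Group G] [Fintype G] {p : ℕ} [Fact p.Prime]
    (P : Sylow p G) (x y : G)
    (hx : x ∈ (P : Subgroup G) ⊓ Subgroup.centralizer ((P : Subgroup G) : Set G))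
    (hy : y ∈ (P : Subgroup G) ⊓ Subgroup.centralizer ((P : Subgroup G) : Set G))
    (hconj : ∃ g : G, g * x * g⁻¹ = y) :
    ∃ n ∈ Subgroup.normalizer ((P : Subgroup G) : Set G), n * x * n⁻¹ = y := by
  obtain ⟨g, rfl⟩ := hconj
  obtain ⟨n, hn, hgn⟩ :=
    P.conj_eq_normalizer_conj_of_mem_centralizer x g⁻¹ hx.2 (by simpa using hy.2)
  exact ⟨n⁻¹, inv_mem hn, by simpa using hgn.symm⟩
end

section
/- If X and Y are subgroups of a finite group H and φ : X → Y is a group isomorphism, then there exists a finite group G containing H (as a subgroup, up to embedding) and an element g ∈ G such that conjugation by g restricted to (the image of) X realizes φ. -/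
open QuotientGroup

/-- The `X`-component of `h` in the decomposition `h = out ⟦h⟧ * x`. -/
noncomputable def fusionToSub {H : Type*} [Group H] (X : Subgroup H) (h : H) : X :=
  ⟨(Quotient.out ((h : H ⧸ X)))⁻¹ * h, by
    rw [← QuotientGroup.eq, QuotientGroup.out_eq']⟩

theorem fusionToSub_mul {H : Type*} [Group H] (X : Subgroup H) (h : H) (x : X) :
    fusionToSub X (h * x) = fusionToSub X h * x := by
  have h1 : ((h * (x : H) : H) : H ⧸ X) = (h : H ⧸ X) :=
    QuotientGroup.mk_mul_of_mem _ x.2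
  apply Subtype.ext
  show (Quotient.out (((h * x : H) : H ⧸ X)))⁻¹ * (h * x)
      = (Quotient.out ((h : H ⧸ X)))⁻¹ * h * x
  rw [h1, mul_assoc]

/-- Auxiliary map: given `φ : X ≃* Y` and a bijection of coset spaces `ψ`,
send `h = out ⟦h⟧ * x` to `out (ψ ⟦h⟧) * φ x`. -/
noncomputable def fusionAuxF {H : Type*} [Group H] {X Y : Subgroup H} (φ : X ≃* Y)
    (ψ : (H ⧸ X) ≃ (H ⧸ Y)) (h : H) : H :=
  Quotient.out (ψ (h : H ⧸ X)) * (φ (fusionToSub X h) : H)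

theorem fusionAuxF_mk {H : Type*} [Group H] {X Y : Subgroup H} (φ : X ≃* Y)
    (ψ : (H ⧸ X) ≃ (H ⧸ Y)) (h : H) :
    ((fusionAuxF φ ψ h : H) : H ⧸ Y) = ψ (h : H ⧸ X) := by
  rw [fusionAuxF, QuotientGroup.mk_mul_of_mem _ (SetLike.coe_mem _),
    QuotientGroup.out_eq']

theorem fusionAuxF_inv {H : Type*} [Group H] {X Y : Subgroup H} (φ : X ≃* Y)
    (ψ : (H ⧸ X) ≃ (H ⧸ Y)) (h : H) :
    fusionAuxF φ.symm ψ.symm (fusionAuxF φ ψ h) = h := by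
  have hmk := fusionAuxF_mk φ ψ h
  have hsub : fusionToSub Y (fusionAuxF φ ψ h) = φ (fusionToSub X h) := by
    apply Subtype.ext
    show (Quotient.out ((QuotientGroup.mk (fusionAuxF φ ψ h) : H ⧸ Y)))⁻¹ * fusionAuxF φ ψ h
        = (φ (fusionToSub X h) : H)
    rw [hmk, fusionAuxF, inv_mul_cancel_left]
  rw [fusionAuxF, hmk, Equiv.symm_apply_apply, hsub, MulEquiv.symm_apply_apply]
  show Quotient.out ((h : H ⧸ X)) * ((Quotient.out ((h : H ⧸ X)))⁻¹ * h) = h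
  rw [mul_inv_cancel_left]

theorem fusionAuxF_equivariant {H : Type*} [Group H] {X Y : Subgroup H} (φ : X ≃* Y)
    (ψ : (H ⧸ X) ≃ (H ⧸ Y)) (h : H) (x : X) :
    fusionAuxF φ ψ (h * x) = fusionAuxF φ ψ h * (φ x : H) := by
  have h1 : ((h * (x : H) : H) : H ⧸ X) = (h : H ⧸ X) :=
    QuotientGroup.mk_mul_of_mem _ x.2
  rw [fusionAuxF, fusionAuxF, h1, fusionToSub_mul, map_mul, mul_assoc]
  rfl

/-- If `X, Y` are subgroups of a finite group `H` and `φ : X ≃* Y`, then there is a finite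
group `G` containing `H` (via an injective homomorphism `ι`) and `g ∈ G` such that
conjugation by `g` realizes `φ` on (the image of) `X`. -/
theorem fusion_realized_in_overgroup {H : Type*} [Group H] [Fintype H]
    (X Y : Subgroup H) (φ : X ≃* Y) :
    ∃ (G : Type) (_ : Group G) (_ : Fintype G) (ι : H →* G) (g : G),
      Function.Injective ι ∧ ∀ x : X, g * ι x * g⁻¹ = ι (φ x) := by
  classical
  -- coset spaces have equal cardinality
  have hXY : Nat.card X = Nat.card Y := Nat.card_congr φ.toEquiv
  have hq : Nat.card (H ⧸ X) = Nat.card (H ⧸ Y) := by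
    have h1 := Subgroup.card_eq_card_quotient_mul_card_subgroup X
    have h2 := Subgroup.card_eq_card_quotient_mul_card_subgroup Y
    have hpos : 0 < Nat.card Y := Nat.card_pos
    have h3 := h1.symm.trans h2
    rw [hXY] at h3
    exact Nat.eq_of_mul_eq_mul_right Nat.card_pos h3
  obtain ⟨ψ⟩ : Nonempty ((H ⧸ X) ≃ (H ⧸ Y)) := by
    have : Finite (H ⧸ X) := Quotient.finite _
    have : Finite (H ⧸ Y) := Quotient.finite _
    exact Finite.card_eq.mp hq
  -- the permutation g
  let gE : Equiv.Perm H :=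
    ⟨fusionAuxF φ ψ, fusionAuxF φ.symm ψ.symm, fusionAuxF_inv φ ψ, fusionAuxF_inv φ.symm ψ.symm⟩
  -- the embedding via right multiplication
  let ι : H →* Equiv.Perm H := MonoidHom.mk' (fun a => Equiv.mulRight a⁻¹) (by
    intro a b
    ext h
    simp [mul_assoc])
  have hinj : Function.Injective ι := by
    intro a b hab
    have := congrArg (fun e : Equiv.Perm H => e 1) hab
    simpa [ι] using this
  have hconj : ∀ x : X, gE * ι x * gE⁻¹ = ι (φ x) := by
    intro x
    ext h
    show gE ((ι x) (gE.symm h)) = (ι (φ x)) h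
    have key := fusionAuxF_equivariant φ ψ ((gE.symm h) * (x : H)⁻¹) x
    have hc : (gE.symm h) * (x : H)⁻¹ * (x : H) = gE.symm h := by group
    rw [hc] at key
    have h2 : fusionAuxF φ ψ (gE.symm h) = h := gE.apply_symm_apply h
    rw [h2] at key
    show fusionAuxF φ ψ ((gE.symm h) * (x : H)⁻¹) = h * (φ x : H)⁻¹
    rw [eq_mul_inv_iff_mul_eq]
    exact key.symm
  -- shrink to `Type 0`
  let e : H ≃ Fin (Fintype.card H) := Fintype.equivFin H
  let μ : Equiv.Perm H ≃* Equiv.Perm (Fin (Fintype.card H)) :=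
    { toEquiv := e.permCongr
      map_mul' := by intro p q; ext k; simp [Equiv.permCongr_apply] }
  refine ⟨Equiv.Perm (Fin (Fintype.card H)), inferInstance, inferInstance,
    μ.toMonoidHom.comp ι, μ gE, μ.injective.comp hinj, ?_⟩
  intro x
  have := congrArg μ (hconj x)
  simpa [map_mul] using this
end

section
/- Any two elements of the same order in a finite group H are conjugate in some finite group G containing H. -/
open Equiv Equiv.Perm

lemma cycleType_toPerm_const {H : Type*} [Group H] [Fintype H] [DecidableEq H]
    (x : H) {n : ℕ} (hn : n ∈ (MulAction.toPermHom H H x).cycleType) :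
    n = orderOf x := by
  set σ := MulAction.toPermHom H H x with hσ
  have horder : orderOf σ = orderOf x := by
    rw [hσ]
    exact orderOf_injective _ MulAction.toPerm_injective x
  rw [cycleType_def, Multiset.mem_map] at hn
  obtain ⟨c, hc, rfl⟩ := hn
  rw [← Finset.mem_def] at hc
  have hcycle : c.IsCycle := (mem_cycleFactorsFinset_iff.mp hc).1
  obtain ⟨a, ha⟩ := hcycle.nonempty_support
  have hceq : c = σ.cycleOf a := cycle_is_cycleOf ha hc
  have h1 : (Function.comp Finset.card Equiv.Perm.support) c = orderOf c := by
    simp [hcycle.orderOf]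
  rw [h1]
  have hdvd1 : orderOf c ∣ orderOf x := by
    rw [← horder, hceq]; exact orderOf_cycleOf_dvd_orderOf σ a
  have hdvd2 : orderOf x ∣ orderOf c := by
    have hfix : (c ^ orderOf c) a = a := by rw [pow_orderOf_eq_one]; rfl
    rw [hceq, cycleOf_pow_apply_self, ← hceq] at hfix
    have hσpow : (σ ^ orderOf c) a = x ^ orderOf c * a := by
      rw [hσ, ← map_pow]
      simp [MulAction.toPermHom_apply, MulAction.toPerm_apply, smul_eq_mul]
    rw [hσpow] at hfix
    have hpow1 : x ^ orderOf c = 1 :=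
      mul_right_cancel (b := a) (by rw [hfix, one_mul])
    exact orderOf_dvd_of_pow_eq_one hpow1
  exact Nat.dvd_antisymm hdvd1 hdvd2

lemma support_toPerm_eq {H : Type*} [Group H] [Fintype H] [DecidableEq H]
    (x : H) (hx : x ≠ 1) : (MulAction.toPermHom H H x).support = Finset.univ := by
  ext a
  simp only [Equiv.Perm.mem_support, Finset.mem_univ, iff_true,
    MulAction.toPermHom_apply, MulAction.toPerm_apply, smul_eq_mul]
  intro h
  exact hx (mul_right_cancel (b := a) (by rw [h, one_mul]))

/-- `permCongr` along an equiv, as a monoid hom. -/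
def permCongrHom {α : Type*} {β : Type*} (e : α ≃ β) : Equiv.Perm α →* Equiv.Perm β where
  toFun := e.permCongr
  map_one' := by ext b; simp
  map_mul' p q := by ext b; simp

lemma permCongrHom_injective {α : Type*} {β : Type*} (e : α ≃ β) :
    Function.Injective (_root_.permCongrHom e) :=
  fun p q h => by
    have : e.permCongr p = e.permCongr q := h
    exact e.permCongr.injective this

/-- Any two elements of the same order in a finite group `H` are conjugate in some
finite group `G` containing `H`. -/
theorem conjugate_in_overgroup_of_same_order {H : Type*} [Group H] [Fintype H]
    (x y : H) (h : orderOf x = orderOf y) :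
    ∃ (G : Type) (_ : Group G) (_ : Fintype G) (ι : H →* G) (g : G),
      Function.Injective ι ∧ g * ι x * g⁻¹ = ι y := by
  classical
  set ι0 := MulAction.toPermHom H H with hι0
  have hinj0 : Function.Injective ι0 := MulAction.toPerm_injective
  have hconj : IsConj (ι0 x) (ι0 y) := by
    rw [isConj_iff_cycleType_eq]
    by_cases hx1 : x = 1
    · have hy1 : y = 1 := by
        rw [← orderOf_eq_one_iff, ← h, orderOf_eq_one_iff, hx1]
      rw [hx1, hy1]
    · have hy1 : y ≠ 1 := fun hy => hx1 (by
        rw [← orderOf_eq_one_iff, h, hy, orderOf_one])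
      have hxall : ∀ n ∈ (ι0 x).cycleType, n = orderOf x :=
        fun n hn => cycleType_toPerm_const x hn
      have hyall : ∀ n ∈ (ι0 y).cycleType, n = orderOf y :=
        fun n hn => cycleType_toPerm_const y hn
      have hsx : (ι0 x).cycleType.sum = Fintype.card H := by
        rw [Equiv.Perm.sum_cycleType, support_toPerm_eq x hx1, Finset.card_univ]
      have hsy : (ι0 y).cycleType.sum = Fintype.card H := by
        rw [Equiv.Perm.sum_cycleType, support_toPerm_eq y hy1, Finset.card_univ]
      have hxrep : (ι0 x).cycleType = Multiset.replicate
          (Multiset.card (ι0 x).cycleType) (orderOf x) :=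
        Multiset.eq_replicate_card.mpr hxall
      have hyrep : (ι0 y).cycleType = Multiset.replicate
          (Multiset.card (ι0 y).cycleType) (orderOf y) :=
        Multiset.eq_replicate_card.mpr hyall
      have hcard : Multiset.card (ι0 x).cycleType = Multiset.card (ι0 y).cycleType := by
        have hxs := hsx
        have hys := hsy
        rw [hxrep, Multiset.sum_replicate, smul_eq_mul] at hxs
        rw [hyrep, Multiset.sum_replicate, smul_eq_mul] at hys
        have hpos : 0 < orderOf x := orderOf_pos x
        apply Nat.eq_of_mul_eq_mul_right hpos
        rw [← h] at hys
        omega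
      rw [hxrep, hyrep, hcard, h]
  -- transport into `Perm (Fin (card H))`, which lives in `Type`
  let e : H ≃ Fin (Fintype.card H) := Fintype.equivFin H
  refine ⟨Equiv.Perm (Fin (Fintype.card H)), inferInstance, inferInstance,
    (_root_.permCongrHom e).comp ι0, ?_⟩
  obtain ⟨g0, hg0⟩ := isConj_iff.mp hconj
  refine ⟨_root_.permCongrHom e g0, (permCongrHom_injective e).comp hinj0, ?_⟩
  simp only [MonoidHom.comp_apply]
  rw [← map_inv, ← map_mul, ← map_mul, hg0]
end

section
/- Let G be a finite group, P a p-subgroup of G, and Q ≤ P with N_P(Q) a Sylow p-subgroup of N_G(Q). Then every subgroup of P that is G-conjugate to Q has normalizer in P of order at most |N_P(Q)|. -/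
/-!
Conjugating by `g⁻¹` carries `N_P(gQg⁻¹)` isomorphically onto a `p`-subgroup of `N_G(Q)`.
Every `p`-subgroup of `N_G(Q)` is at most as large as a Sylow `p`-subgroup of `N_G(Q)`,
which by hypothesis is `N_P(Q)`.
-/

open Subgroup

section

variable {G : Type*} [Group G] {p : ℕ} [Fact p.Prime]

theorem IsPGroup.card_le_card_sylow [Finite G] {H : Subgroup G} (hH : IsPGroup p H)
    (R : Sylow p G) : Nat.card H ≤ Nat.card R := by
  obtain ⟨S, hHS⟩ := hH.exists_le_sylow
  calc Nat.card H ≤ Nat.card S := card_le_of_le hHS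
    _ = Nat.card R := by rw [S.card_eq_multiplicity, R.card_eq_multiplicity]

theorem IsPGroup.card_le_card_sylow_of_le {H N : Subgroup G} [Finite N] (hH : IsPGroup p H)
    (hHN : H ≤ N) (R : Sylow p N) : Nat.card H ≤ Nat.card R := by
  rw [← Nat.card_congr (subgroupOfEquivOfLe hHN).toEquiv]
  exact (hH.of_equiv (subgroupOfEquivOfLe hHN).symm).card_le_card_sylow R

end

theorem Subgroup.normalizer_map_inf_eq_map {G H : Type*} [Group G] [Group H] (f : G ≃* H)
    (Q : Subgroup G) (P : Subgroup H) :
    normalizer (Q.map f.toMonoidHom : Set H) ⊓ P =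
      (normalizer (Q : Set G) ⊓ P.comap f.toMonoidHom).map f.toMonoidHom := by
  rw [map_inf_eq _ _ _ f.injective, map_equiv_normalizer_eq,
    map_comap_eq_self_of_surjective f.surjective]

theorem fully_normalized_of_sylow_normalizer_general {G : Type*} [Group G] [Fintype G]
    {p : ℕ} [Fact p.Prime] (P Q : Subgroup G) (hP : IsPGroup p P)
    (hsyl : ∃ R : Sylow p (Subgroup.normalizer (Q : Set G)),
      (R : Subgroup (Subgroup.normalizer (Q : Set G))) = ((Subgroup.normalizer (Q : Set G)) ⊓ P).subgroupOf (Subgroup.normalizer (Q : Set G))) :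
    ∀ g : G, Subgroup.map (MulAut.conj g).toMonoidHom Q ≤ P →
      Nat.card (Subgroup.normalizer (Subgroup.map (MulAut.conj g).toMonoidHom Q : Set G) ⊓ P : Subgroup G)
        ≤ Nat.card ((Subgroup.normalizer (Q : Set G)) ⊓ P : Subgroup G) := by
  intro g _
  obtain ⟨R, hR⟩ := hsyl
  have hpulled :
      IsPGroup p (normalizer (Q : Set G) ⊓ P.comap (MulAut.conj g).toMonoidHom : Subgroup G) :=
    (hP.comap_of_injective (MulAut.conj g).toMonoidHom (MulAut.conj g).injective).to_le
      inf_le_right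
  calc Nat.card (normalizer (Q.map (MulAut.conj g).toMonoidHom : Set G) ⊓ P : Subgroup G)
      = Nat.card (normalizer (Q : Set G) ⊓ P.comap (MulAut.conj g).toMonoidHom : Subgroup G) := by
        rw [normalizer_map_inf_eq_map, card_map_of_injective (MulAut.conj g).injective]
    _ ≤ Nat.card R := hpulled.card_le_card_sylow_of_le inf_le_left R
    _ = Nat.card (normalizer (Q : Set G) ⊓ P : Subgroup G) := by
        rw [hR]; exact Nat.card_congr (subgroupOfEquivOfLe inf_le_left).toEquiv

/-- Let `P` be a `p`-subgroup of a finite group `G` and `Q ≤ P` with `N_P(Q)` a Sylow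
`p`-subgroup of `N_G(Q)`.  Then every `G`-conjugate of `Q` contained in `P` has
normalizer in `P` of order at most `|N_P(Q)|`. -/
theorem fully_normalized_of_sylow_normalizer {G : Type*} [Group G] [Fintype G]
    {p : ℕ} [Fact p.Prime] (P Q : Subgroup G) (hP : IsPGroup p P) (hQP : Q ≤ P)
    (hsyl : ∃ R : Sylow p (Subgroup.normalizer (Q : Set G)),
      (R : Subgroup (Subgroup.normalizer (Q : Set G))) = ((Subgroup.normalizer (Q : Set G)) ⊓ P).subgroupOf (Subgroup.normalizer (Q : Set G))) :
    ∀ g : G, Subgroup.map (MulAut.conj g).toMonoidHom Q ≤ P →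
      Nat.card (Subgroup.normalizer (Subgroup.map (MulAut.conj g).toMonoidHom Q : Set G) ⊓ P : Subgroup G)
        ≤ Nat.card ((Subgroup.normalizer (Q : Set G)) ⊓ P : Subgroup G) :=
  fully_normalized_of_sylow_normalizer_general P Q hP hsyl
end

section
/- Let G be a finite group, P a Sylow p-subgroup, and Q ≤ P. Then there exists g ∈ G such that T := gQg⁻¹ ≤ P and N_P(T) is a Sylow p-subgroup of N_G(T). -/
/-!
Take a Sylow `p`-subgroup `K` of `N_G(Q)` containing `Q`, and a Sylow `p`-subgroup `P'` of `G`
containing `K`. Conjugating `P'` onto `P` by some `g` carries `N_G(Q)` onto `N_G(gQg⁻¹)` and `K`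
onto a Sylow `p`-subgroup of `N_G(gQg⁻¹)` lying in `P`; by maximality it is all of the `p`-group
`N_G(gQg⁻¹) ∩ P`.
-/

open Subgroup

section

variable {G : Type*} [Group G] {p : ℕ} [Fact p.Prime]

theorem IsPGroup.exists_le_le_card_eq {Q H : Subgroup G} [Finite H] (hQ : IsPGroup p Q)
    (hQH : Q ≤ H) :
    ∃ K : Subgroup G, Q ≤ K ∧ K ≤ H ∧ Nat.card K = p ^ (Nat.card H).factorization p := by
  obtain ⟨S, hQS⟩ := (hQ.comap_subtype (K := H)).exists_le_sylow
  refine ⟨(S : Subgroup H).map H.subtype, ?_, map_subtype_le _, ?_⟩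
  · simpa [map_comap_eq, inf_eq_left.mpr hQH] using map_mono (f := H.subtype) hQS
  · rw [card_map_of_injective H.subtype_injective, S.card_eq_multiplicity]

theorem Sylow.exists_map_conj_eq (P P' : Sylow p G) [Finite (Sylow p G)] :
    ∃ g : G, (P' : Subgroup G).map (MulAut.conj g).toMonoidHom = P := by
  obtain ⟨g, hg⟩ := MulAction.exists_smul_eq G P' P
  exact ⟨g, congrArg Sylow.toSubgroup hg⟩

theorem Sylow.exists_eq_inf_subgroupOf [Finite G] (P : Sylow p G) {H K : Subgroup G}
    (hKH : K ≤ H) (hKP : K ≤ P) (hK : Nat.card K = p ^ (Nat.card H).factorization p) :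
    ∃ R : Sylow p H, (R : Subgroup H) = (H ⊓ P).subgroupOf H := by
  have hcard : Nat.card (K.subgroupOf H) = p ^ (Nat.card H).factorization p := by
    rw [Nat.card_congr (subgroupOfEquivOfLe hKH).toEquiv, hK]
  let R := Sylow.ofCard (K.subgroupOf H) hcard
  have hpgroup : IsPGroup p ((H ⊓ P).subgroupOf H) :=
    (P.isPGroup'.to_le inf_le_right).comap_subtype
  exact ⟨R, (R.is_maximal' hpgroup fun x hx => le_inf hKH hKP hx).symm⟩

end

/-- Every subgroup `Q` of a Sylow `p`-subgroup `P` of a finite group `G` has a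
`G`-conjugate `T ≤ P` such that `N_P(T)` is a Sylow `p`-subgroup of `N_G(T)`. -/
theorem exists_fully_normalized_conjugate {G : Type*} [Group G] [Fintype G]
    {p : ℕ} [Fact p.Prime] (P : Sylow p G) (Q : Subgroup G) (hQP : Q ≤ P) :
    ∃ g : G, Subgroup.map (MulAut.conj g).toMonoidHom Q ≤ P ∧
      ∃ R : Sylow p (Subgroup.normalizer (Subgroup.map (MulAut.conj g).toMonoidHom Q : Set G)),
        (R : Subgroup (Subgroup.normalizer (Subgroup.map (MulAut.conj g).toMonoidHom Q : Set G))) =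
          ((Subgroup.normalizer (Subgroup.map (MulAut.conj g).toMonoidHom Q : Set G)) ⊓ P).subgroupOf
            (Subgroup.normalizer (Subgroup.map (MulAut.conj g).toMonoidHom Q : Set G)) := by
  obtain ⟨K, hQK, hKN, hK⟩ :=
    (P.isPGroup'.to_le hQP).exists_le_le_card_eq (le_normalizer (H := Q))
  obtain ⟨P', hKP'⟩ := (IsPGroup.of_card hK).exists_le_sylow
  obtain ⟨g, hP'⟩ := P.exists_map_conj_eq P'
  set e := (MulAut.conj g).toMonoidHom
  have hN : (normalizer (Q : Set G)).map e = normalizer (Q.map e : Set G) :=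
    map_equiv_normalizer_eq Q (MulAut.conj g)
  have hKP : K.map e ≤ P := hP' ▸ map_mono hKP'
  refine ⟨g, (map_mono hQK).trans hKP, P.exists_eq_inf_subgroupOf (hN ▸ map_mono hKN) hKP ?_⟩
  rw [← hN, card_map_of_injective (MulAut.conj g).injective,
    card_map_of_injective (MulAut.conj g).injective, hK]
end

section
/- A finite group G is p-nilpotent (i.e. G = O_{p'}(G)·P for P a Sylow p-subgroup) if and only if no two distinct elements of P are conjugate in G but not in P— equivalently, any two elements of P conjugate in G are conjugate in P. (Frobenius criterion, fusion form, easy direction: if G = O_{p'}(G)P then elements of P conjugate in G are conjugate in P.) -/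
open scoped Pointwise


/-- Frobenius criterion, fusion form (easy direction): if `G = O_{p'}(G)·P`, i.e.
`G = N·P` for a normal `p'`-subgroup `N` and a Sylow `p`-subgroup `P`, then any two
elements of `P` that are conjugate in `G` are already conjugate in `P`. -/
theorem pnilpotent_no_fusion {G : Type*} [Group G] [Fintype G] {p : ℕ} [Fact p.Prime]
    (P : Sylow p G) (N : Subgroup G) [N.Normal] (hN : ¬ p ∣ Nat.card N)
    (hNP : N ⊔ (P : Subgroup G) = ⊤)
    (x y : G) (hx : x ∈ (P : Subgroup G)) (hy : y ∈ (P : Subgroup G))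
    (g : G) (hg : g * x * g⁻¹ = y) :
    ∃ h ∈ (P : Subgroup G), h * x * h⁻¹ = y := by
  -- decompose g = n * q with n ∈ N, q ∈ P
  have hgmem : g ∈ (N : Set G) * ((P : Subgroup G) : Set G) := by
    rw [← Subgroup.normal_mul]
    rw [hNP]; trivial
  obtain ⟨n, hn, q, hq, rfl⟩ := hgmem
  refine ⟨q, hq, ?_⟩
  set x' := q * x * q⁻¹ with hx'def
  have hx'P : x' ∈ (P : Subgroup G) := by
    exact Subgroup.mul_mem _ (Subgroup.mul_mem _ hq hx) (Subgroup.inv_mem _ hq)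
  -- z = y * x'⁻¹ ∈ N ∩ P
  set z := y * x'⁻¹ with hzdef
  have hy' : y = n * x' * n⁻¹ := by
    rw [hx'def, ← hg]; group
  have hzN : z ∈ N := by
    have : z = n * (x' * n⁻¹ * x'⁻¹) := by rw [hzdef, hy']; group
    rw [this]
    exact N.mul_mem hn (Subgroup.Normal.conj_mem ‹N.Normal› n⁻¹ (N.inv_mem hn) x')
  have hzP : z ∈ (P : Subgroup G) := Subgroup.mul_mem _ hy (Subgroup.inv_mem _ hx'P)
  -- orderOf z divides a power of p (z ∈ P, a p-group)
  obtain ⟨k, hk⟩ := P.2 ⟨z, hzP⟩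
  have hk' : z ^ p ^ k = 1 := by
    have := congrArg (Subgroup.subtype (P : Subgroup G)) hk
    simpa using this
  have hdvd1 : orderOf z ∣ p ^ k := orderOf_dvd_of_pow_eq_one hk'
  have hdvd2 : orderOf z ∣ Nat.card N := by
    have : orderOf (⟨z, hzN⟩ : N) ∣ Nat.card N := orderOf_dvd_natCard _
    simpa [Subgroup.orderOf_coe] using this
  have hcop : Nat.Coprime (p ^ k) (Nat.card N) :=
    Nat.Coprime.pow_left _ ((Nat.Prime.coprime_iff_not_dvd (Fact.out)).mpr hN)
  have hz1 : z = 1 := by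
    have : orderOf z ∣ 1 := Nat.dvd_one.mpr (Nat.eq_one_of_dvd_coprimes hcop hdvd1 hdvd2)
    simpa [orderOf_eq_one_iff] using orderOf_eq_one_iff.mp (Nat.dvd_one.mp this)
  have hyx : y = x' := mul_inv_eq_one.mp hz1
  rw [← hyx]
end

section
/- If G is a finite group with a normal p-complement (G = N ⋊ P with N of order coprime to p and P ∈ Syl_p(G)), then N_G(Q)/C_G(Q) is a p-group for every p-subgroup Q of G. -/
/-!
A `p`-subgroup `Q` meets the `p'`-group `N` trivially, so for `g ∈ N ∩ N_G(Q)` and `q ∈ Q` the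
commutator `⁅q, g⁆`, which lies in `Q ∩ N`, is trivial: `N ∩ N_G(Q) ≤ C_G(Q)`. Hence
`|N_G(Q) : C_G(Q)|` divides `|N_G(Q) : N ∩ N_G(Q)| = |N N_G(Q) : N|`, which divides the
`p`-power `|G : N|`.
-/

namespace Subgroup

open scoped commutatorElement

variable {G : Type*} [Group G]

theorem inf_normalizer_le_centralizer_of_disjoint {H K : Subgroup G} [K.Normal]
    (hHK : Disjoint H K) : K ⊓ normalizer (H : Set G) ≤ centralizer (H : Set G) := by
  rintro g ⟨hgK, hgH⟩
  rw [mem_centralizer_iff]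
  intro h hh
  have hcommH : ⁅h, g⁆ = h * (g * h⁻¹ * g⁻¹) := by group
  have hmemH : ⁅h, g⁆ ∈ H :=
    hcommH ▸ H.mul_mem hh ((mem_normalizer_iff.mp hgH h⁻¹).mp (H.inv_mem hh))
  have hmemK : ⁅h, g⁆ ∈ K :=
    commutatorElement_def h g ▸ K.mul_mem (Normal.conj_mem inferInstance g hgK h) (K.inv_mem hgK)
  exact commutatorElement_eq_one_iff_mul_comm.mp (hHK.le_bot ⟨hmemH, hmemK⟩)

theorem relIndex_dvd_index_of_inf_le {H K N : Subgroup G} [N.Normal] (h : N ⊓ K ≤ H) :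
    H.relIndex K ∣ N.index :=
  calc H.relIndex K ∣ (N ⊓ K).relIndex K := relIndex_dvd_of_le_left K h
    _ = N.relIndex K := inf_relIndex_right N K
    _ ∣ N.index := relIndex_dvd_index_of_normal N K

end Subgroup

theorem IsPGroup.disjoint_of_not_dvd_natCard {G : Type*} [Group G] {p : ℕ} [Fact p.Prime]
    {Q N : Subgroup G} (hQ : IsPGroup p Q) (hN : ¬ p ∣ Nat.card N) : Disjoint Q N :=
  hQ.disjoint_of_coprime (IsPGroup.of_card_dvd_pow (pow_one (Nat.card N)).symm.dvd)
    ((Nat.Prime.coprime_iff_not_dvd Fact.out).mpr hN)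

/-- If a finite group `G` has a normal `p`-complement `N` (so `N ⊴ G`, `p ∤ |N|` and
`G/N` is a `p`-group), then `N_G(Q)/C_G(Q)` has `p`-power order for every
`p`-subgroup `Q ≤ G`. -/
theorem normal_p_complement_automizers {G : Type*} [Group G] [Fintype G]
    {p : ℕ} [Fact p.Prime] (N : Subgroup G) [N.Normal] (hN : ¬ p ∣ Nat.card N)
    (hquot : IsPGroup p (G ⧸ N)) :
    ∀ Q : Subgroup G, IsPGroup p Q →
      ∃ k : ℕ, (Subgroup.centralizer (Q : Set G)).relIndex (Subgroup.normalizer (Q : Set G)) = p ^ k := by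
  intro Q hQ
  have hdvd : (Subgroup.centralizer (Q : Set G)).relIndex (Subgroup.normalizer (Q : Set G))
      ∣ N.index :=
    Subgroup.relIndex_dvd_index_of_inf_le
      (Subgroup.inf_normalizer_le_centralizer_of_disjoint (hQ.disjoint_of_not_dvd_natCard hN))
  obtain ⟨n, hn⟩ := IsPGroup.iff_card.mp hquot
  rw [Subgroup.index_eq_card, hn] at hdvd
  obtain ⟨k, -, hk⟩ := (Nat.dvd_prime_pow Fact.out).mp hdvd
  exact ⟨k, hk⟩
end
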